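/- Let Q = −Δ + V on ℝ^d with V measurable, and let {χ_j}_{j∈J} be a locally finite partition of unity with each χ_j ∈ C₀^∞(ℝ^d, ℝ), Σ_{j∈J} χ_j(x)² = 1 for all x, and with m₁² = sup_x Σ_j |∇χ_j(x)|² < ∞ and m₂² = sup_x Σ_j (Δχ_j(x))² < ∞. Then for any u ∈ C₀^∞(ℝ^d), 2‖Qu‖² + 3m₂²‖u‖² + 8m₁²‖∇u‖² ≥ Σ_{j∈J} ‖Q(χ_j u)‖² (norms in L²(ℝ^d)). Moreover, if Re V ≥ 0, then 2‖Qu‖² + 3m₂²‖u‖² + 8m₁² Re⟨Qu, u⟩ ≥ Σ_{j∈J} ‖Q(χ_j u)‖². -/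

import Mathlib

/- The IMS localization formula (Lemma 4.3) for a Schrödinger-type operator
`Q = -Δ + V` on `ℝ^d`. -/

open MeasureTheory Real

variable {d : ℕ}

/-- The Laplacian of a complex-valued function on `ℝ^d`. -/
noncomputable def lapC (u : EuclideanSpace ℝ (Fin d) → ℂ) (x : EuclideanSpace ℝ (Fin d)) : ℂ :=
  ∑ i : Fin d,
    fderiv ℝ (fun y => fderiv ℝ u y (EuclideanSpace.single i 1)) x (EuclideanSpace.single i 1)

/-- The Laplacian of a real-valued function on `ℝ^d`. -/
noncomputable def lapR (g : EuclideanSpace ℝ (Fin d) → ℝ) (x : EuclideanSpace ℝ (Fin d)) : ℝ :=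
  ∑ i : Fin d,
    fderiv ℝ (fun y => fderiv ℝ g y (EuclideanSpace.single i 1)) x (EuclideanSpace.single i 1)

/-- `|∇g(x)|²` for a real-valued function. -/
noncomputable def gradSqR (g : EuclideanSpace ℝ (Fin d) → ℝ) (x : EuclideanSpace ℝ (Fin d)) : ℝ :=
  ∑ i : Fin d, (fderiv ℝ g x (EuclideanSpace.single i 1)) ^ 2

/-- `|∇u(x)|²` for a complex-valued function. -/
noncomputable def gradSqC (u : EuclideanSpace ℝ (Fin d) → ℂ) (x : EuclideanSpace ℝ (Fin d)) : ℝ :=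
  ∑ i : Fin d, ‖fderiv ℝ u x (EuclideanSpace.single i 1)‖ ^ 2

/-- The Schrödinger-type operator `Q = -Δ + V`. -/
noncomputable def Qop (V : EuclideanSpace ℝ (Fin d) → ℂ)
    (u : EuclideanSpace ℝ (Fin d) → ℂ) : EuclideanSpace ℝ (Fin d) → ℂ :=
  fun x => -lapC u x + V x * u x

/-- The `L²(ℝ^d, ℂ)` norm. -/
noncomputable def L2E (u : EuclideanSpace ℝ (Fin d) → ℂ) : ℝ :=
  (eLpNorm u 2 volume).toReal

section IMSAux

local notation "Es" => EuclideanSpace ℝ (Fin d)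

/-! ### Elementary inequalities -/

lemma key_ineq (a b c : ℂ) :
    ‖a + b + c‖ ^ 2 ≤ 2 * ‖a‖ ^ 2 + 3 * ‖b‖ ^ 2 + 2 * ‖c‖ ^ 2 + 2 * (starRingEnd ℂ a * c).re := by
  simp only [Complex.sq_norm, Complex.normSq_apply, Complex.add_re,
    Complex.add_im, Complex.mul_re, Complex.conj_re, Complex.conj_im]
  nlinarith [sq_nonneg (a.re - b.re), sq_nonneg (b.re - c.re), sq_nonneg (a.im - b.im),
    sq_nonneg (b.im - c.im)]

lemma cs_ineq {n : ℕ} (c : Fin n → ℝ) (z : Fin n → ℂ) :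
    ‖∑ i, (c i : ℂ) * z i‖ ^ 2 ≤ (∑ i, c i ^ 2) * (∑ i, ‖z i‖ ^ 2) := by
  have h1 : ‖∑ i, (c i : ℂ) * z i‖ ≤ ∑ i, |c i| * ‖z i‖ := by
    refine (norm_sum_le _ _).trans (le_of_eq (Finset.sum_congr rfl fun i _ => ?_))
    rw [norm_mul, Complex.norm_real, Real.norm_eq_abs]
  calc ‖∑ i, (c i : ℂ) * z i‖ ^ 2 ≤ (∑ i, |c i| * ‖z i‖) ^ 2 := by
        nlinarith [h1, norm_nonneg (∑ i, (c i : ℂ) * z i)]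
    _ ≤ (∑ i, |c i| ^ 2) * (∑ i, ‖z i‖ ^ 2) := Finset.sum_mul_sq_le_sq_mul_sq _ _ _
    _ = (∑ i, c i ^ 2) * (∑ i, ‖z i‖ ^ 2) := by simp [sq_abs]

/-! ### Derivative helpers -/

section helpers
variable {F : Type*} [NormedAddCommGroup F] [NormedSpace ℝ F]

lemma contDiff_D {f : Es → F} (hf : ContDiff ℝ (⊤ : ℕ∞) f) (v : Es) :
    ContDiff ℝ (⊤ : ℕ∞) (fun x => fderiv ℝ f x v) :=
  (hf.fderiv_right (by simp)).clm_apply contDiff_const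

lemma hcs_D {f : Es → F} (hf : HasCompactSupport f) (v : Es) :
    HasCompactSupport (fun x => fderiv ℝ f x v) :=
  ((hf.fderiv ℝ).comp_left (g := fun L : Es →L[ℝ] F => L v) rfl : _)

end helpers

lemma hcs_sum {β : Type*} [AddCommMonoid β] {ι : Type*} (s : Finset ι) (f : ι → Es → β)
    (h : ∀ i, HasCompactSupport (f i)) :
    HasCompactSupport (fun x => ∑ i ∈ s, f i x) := by
  classical
  induction s using Finset.induction_on with
  | empty => simp only [Finset.sum_empty]; exact HasCompactSupport.zero
  | insert _ _ hni ih =>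
    simp only [Finset.sum_insert hni]
    exact (h _).add ih

lemma cont_lapC {f : Es → ℂ} (hf : ContDiff ℝ (⊤ : ℕ∞) f) : Continuous (lapC f) := by
  refine continuous_finset_sum _ fun i _ => ?_
  exact (contDiff_D (contDiff_D hf _) _).continuous

lemma hcs_lapC {f : Es → ℂ} (hfs : HasCompactSupport f) : HasCompactSupport (lapC f) :=
  hcs_sum _ _ fun i => hcs_D (hcs_D hfs _) _

lemma memℒp_Qop (V : Es → ℂ)
    (hVL2 : ∀ u : EuclideanSpace ℝ (Fin d) → ℂ, ContDiff ℝ (⊤ : ℕ∞) u → HasCompactSupport u →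
      MemLp (fun x => V x * u x) 2 volume)
    {w : Es → ℂ} (hw : ContDiff ℝ (⊤ : ℕ∞) w) (hws : HasCompactSupport w) :
    MemLp (Qop V w) 2 volume := by
  have h1 : MemLp (fun x => -lapC w x) 2 (volume : Measure Es) :=
    ((cont_lapC hw).neg.memLp_of_hasCompactSupport ((hcs_lapC hws).neg ))
  exact h1.add (hVL2 w hw hws)

/-! ### L² facts -/

lemma integrable_norm_sq {f : Es → ℂ} (hf : MemLp f 2 volume) :
    Integrable (fun x => ‖f x‖ ^ 2) volume := by
  have h := hf.integrable_norm_rpow two_ne_zero ENNReal.ofNat_ne_top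
  simp only [ENNReal.toReal_ofNat] at h
  convert h using 2 with x
  rw [← Real.rpow_natCast ‖f x‖ 2]
  norm_num

lemma L2E_sq {f : Es → ℂ} (hf : MemLp f 2 volume) :
    L2E f ^ 2 = ∫ x, ‖f x‖ ^ 2 := by
  have h := hf.eLpNorm_eq_integral_rpow_norm two_ne_zero ENNReal.ofNat_ne_top
  simp only [ENNReal.toReal_ofNat] at h
  have hi : ∫ a, ‖f a‖ ^ (2 : ℝ) ∂(volume : Measure Es) = ∫ a, ‖f a‖ ^ 2 ∂volume :=
    integral_congr_ae (Filter.Eventually.of_forall fun a =>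
      show ‖f a‖ ^ (2:ℝ) = ‖f a‖ ^ (2:ℕ) from Real.rpow_two _)
  rw [hi] at h
  have hnn : 0 ≤ ∫ a, ‖f a‖ ^ 2 ∂(volume : Measure Es) :=
    integral_nonneg fun a => sq_nonneg _
  rw [L2E, h, ENNReal.toReal_ofReal (Real.rpow_nonneg hnn _)]
  rw [← Real.rpow_natCast _ 2, ← Real.rpow_mul hnn]
  norm_num

/-! ### Product rule for the Laplacian -/

lemma fderiv_smul_apply (χ : Es → ℝ) (u : Es → ℂ) (hχ : ContDiff ℝ (⊤ : ℕ∞) χ) (hu : ContDiff ℝ (⊤ : ℕ∞) u)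
    (x v : Es) :
    fderiv ℝ (fun y => χ y • u y) x v = χ x • fderiv ℝ u x v + fderiv ℝ χ x v • u x := by
  rw [fderiv_fun_smul (hχ.differentiable (by simp) x) (hu.differentiable (by simp) x)]
  simp

lemma lapC_smul (χ : Es → ℝ) (u : Es → ℂ) (hχ : ContDiff ℝ (⊤ : ℕ∞) χ) (hu : ContDiff ℝ (⊤ : ℕ∞) u) (x : Es) :
    lapC (fun y => χ y • u y) x = χ x • lapC u x + lapR χ x • u x
      + 2 • ∑ i : Fin d, fderiv ℝ χ x (EuclideanSpace.single i 1)
          • fderiv ℝ u x (EuclideanSpace.single i 1) := by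
  have hdχ := hχ.differentiable (by simp)
  have hdu := hu.differentiable (by simp)
  have key : ∀ i : Fin d,
      fderiv ℝ (fun y => fderiv ℝ (fun y => χ y • u y) y (EuclideanSpace.single i 1)) x
          (EuclideanSpace.single i 1)
        = χ x • fderiv ℝ (fun y => fderiv ℝ u y (EuclideanSpace.single i 1)) x
            (EuclideanSpace.single i 1)
          + fderiv ℝ (fun y => fderiv ℝ χ y (EuclideanSpace.single i 1)) x
              (EuclideanSpace.single i 1) • u x
          + 2 • (fderiv ℝ χ x (EuclideanSpace.single i 1)
              • fderiv ℝ u x (EuclideanSpace.single i 1)) := by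
    intro i
    set v := (EuclideanSpace.single i 1 : Es)
    have h1 : (fun y => fderiv ℝ (fun y => χ y • u y) y v)
        = fun y => χ y • fderiv ℝ u y v + fderiv ℝ χ y v • u y :=
      funext fun y => fderiv_smul_apply χ u hχ hu y v
    rw [h1]
    have hA : DifferentiableAt ℝ (fun y => χ y • fderiv ℝ u y v) x :=
      ((hχ.smul (contDiff_D hu v)).differentiable (by simp)) x
    have hB : DifferentiableAt ℝ (fun y => fderiv ℝ χ y v • u y) x :=
      (((contDiff_D hχ v).smul hu).differentiable (by simp)) x
    rw [fderiv_fun_add hA hB]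
    simp only [ContinuousLinearMap.add_apply]
    rw [fderiv_fun_smul (hdχ x) ((contDiff_D hu v).differentiable (by simp) x),
        fderiv_fun_smul ((contDiff_D hχ v).differentiable (by simp) x) (hdu x)]
    simp only [ContinuousLinearMap.add_apply, ContinuousLinearMap.smul_apply,
      ContinuousLinearMap.smulRight_apply]
    module
  simp only [lapC, key, Finset.sum_add_distrib, ← Finset.smul_sum, lapR, Finset.sum_smul]

lemma Qop_expand (V : Es → ℂ) (χ : Es → ℝ) (u : Es → ℂ)
    (hχ : ContDiff ℝ (⊤ : ℕ∞) χ) (hu : ContDiff ℝ (⊤ : ℕ∞) u) (x : Es) :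
    Qop V (fun y => (χ y : ℂ) * u y) x
      = (χ x : ℂ) * Qop V u x + (-(lapR χ x : ℂ) * u x)
        + (-2 * ∑ i : Fin d, (fderiv ℝ χ x (EuclideanSpace.single i 1) : ℂ)
            * fderiv ℝ u x (EuclideanSpace.single i 1)) := by
  have hsm : (fun y => (χ y : ℂ) * u y) = fun y => χ y • u y := by
    funext y; rw [Complex.real_smul]
  simp only [Qop, hsm]
  rw [lapC_smul χ u hχ hu x]
  simp only [Complex.real_smul, smul_eq_mul, nsmul_eq_mul, Finset.mul_sum]
  push_cast
  have hS : ∑ i : Fin d, -2 * ((fderiv ℝ χ x (EuclideanSpace.single i 1) : ℂ)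
        * fderiv ℝ u x (EuclideanSpace.single i 1))
      = -(∑ i : Fin d, 2 * ((fderiv ℝ χ x (EuclideanSpace.single i 1) : ℂ)
        * fderiv ℝ u x (EuclideanSpace.single i 1))) := by
    rw [← Finset.sum_neg_distrib]
    exact Finset.sum_congr rfl fun i _ => by ring
  rw [hS]
  ring

/-- The per-index pointwise estimate. -/
lemma pointwise_bound (V : Es → ℂ) (χ : Es → ℝ) (u : Es → ℂ)
    (hχ : ContDiff ℝ (⊤ : ℕ∞) χ) (hu : ContDiff ℝ (⊤ : ℕ∞) u) (x : Es) :
    ‖Qop V (fun y => (χ y : ℂ) * u y) x‖ ^ 2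
      ≤ 2 * (χ x ^ 2) * ‖Qop V u x‖ ^ 2 + 3 * (lapR χ x) ^ 2 * ‖u x‖ ^ 2
        + 8 * gradSqR χ x * gradSqC u x
        - 4 * (starRingEnd ℂ (Qop V u x)
            * ∑ i : Fin d, ((χ x * fderiv ℝ χ x (EuclideanSpace.single i 1) : ℝ) : ℂ)
              * fderiv ℝ u x (EuclideanSpace.single i 1)).re := by
  rw [Qop_expand V χ u hχ hu x]
  refine (key_ineq _ _ _).trans ?_
  set Q := Qop V u x
  set S := ∑ i : Fin d, (fderiv ℝ χ x (EuclideanSpace.single i 1) : ℂ)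
      * fderiv ℝ u x (EuclideanSpace.single i 1) with hSdef
  have hA : ‖(χ x : ℂ) * Q‖ ^ 2 = χ x ^ 2 * ‖Q‖ ^ 2 := by
    rw [norm_mul, Complex.norm_real, Real.norm_eq_abs, mul_pow, sq_abs]
  have hB : ‖-(lapR χ x : ℂ) * u x‖ ^ 2 = (lapR χ x) ^ 2 * ‖u x‖ ^ 2 := by
    rw [norm_mul, norm_neg, Complex.norm_real, Real.norm_eq_abs, mul_pow, sq_abs]
  have hC : ‖(-2 : ℂ) * S‖ ^ 2 = 4 * ‖S‖ ^ 2 := by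
    rw [norm_mul]; norm_num; ring
  have hCS : ‖S‖ ^ 2 ≤ gradSqR χ x * gradSqC u x := by
    simpa [gradSqR, gradSqC] using
      cs_ineq (fun i => fderiv ℝ χ x (EuclideanSpace.single i 1))
        (fun i => fderiv ℝ u x (EuclideanSpace.single i 1))
  have hcross : (starRingEnd ℂ ((χ x : ℂ) * Q) * ((-2 : ℂ) * S)).re
      = -2 * (starRingEnd ℂ Q
          * ∑ i : Fin d, ((χ x * fderiv ℝ χ x (EuclideanSpace.single i 1) : ℝ) : ℂ)
            * fderiv ℝ u x (EuclideanSpace.single i 1)).re := by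
    have h1 : ∑ i : Fin d, ((χ x * fderiv ℝ χ x (EuclideanSpace.single i 1) : ℝ) : ℂ)
          * fderiv ℝ u x (EuclideanSpace.single i 1) = (χ x : ℂ) * S := by
      rw [hSdef, Finset.mul_sum]
      exact Finset.sum_congr rfl fun i _ => by push_cast; ring
    rw [h1]
    have h2 : starRingEnd ℂ ((χ x : ℂ) * Q) * ((-2 : ℂ) * S)
        = (((-2 : ℝ) : ℂ)) * ((χ x : ℂ) * (starRingEnd ℂ Q * S)) := by
      rw [map_mul, Complex.conj_ofReal]; push_cast; ring
    have h3 : starRingEnd ℂ Q * ((χ x : ℂ) * S) = (χ x : ℂ) * (starRingEnd ℂ Q * S) := by ring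
    rw [h2, h3, Complex.re_ofReal_mul, Complex.re_ofReal_mul]
  rw [hA, hB, hC, hcross]
  nlinarith [hCS]

end IMSAux

/-- Lemma 4.3, IMS localization formula: for a locally finite
smooth partition of unity `{χ_j}` with `∑_j χ_j² = 1`,
`m₁² = sup_x ∑_j |∇χ_j|²` and `m₂² = sup_x ∑_j (Δχ_j)²`, one has
`2‖Qu‖² + 3m₂²‖u‖² + 8m₁²‖∇u‖² ≥ ∑_j ‖Q(χ_j u)‖²` for `u ∈ C₀^∞(ℝ^d)`,
and if `Re V ≥ 0` the gradient term may be replaced by `8m₁² Re⟨Qu, u⟩`. -/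
theorem ims_localization {d : ℕ}
    (V : EuclideanSpace ℝ (Fin d) → ℂ) (hV : Measurable V)
    (hVL2 : ∀ u : EuclideanSpace ℝ (Fin d) → ℂ, ContDiff ℝ (⊤ : ℕ∞) u → HasCompactSupport u →
      MemLp (fun x => V x * u x) 2 volume)
    {J : Type*} (χ : J → EuclideanSpace ℝ (Fin d) → ℝ)
    (hχ_smooth : ∀ j, ContDiff ℝ (⊤ : ℕ∞) (χ j))
    (hχ_supp : ∀ j, HasCompactSupport (χ j))
    (hχ_locfin : LocallyFinite fun j => Function.support (χ j))
    (hχ_sum : ∀ x, ∑' j, (χ j x) ^ 2 = 1)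
    (m₁ m₂ : ℝ)
    (hbdd₁ : BddAbove (Set.range fun x => ∑' j, gradSqR (χ j) x))
    (hm₁ : m₁ ^ 2 = ⨆ x, ∑' j, gradSqR (χ j) x)
    (hbdd₂ : BddAbove (Set.range fun x => ∑' j, (lapR (χ j) x) ^ 2))
    (hm₂ : m₂ ^ 2 = ⨆ x, ∑' j, (lapR (χ j) x) ^ 2)
    (u : EuclideanSpace ℝ (Fin d) → ℂ)
    (hu : ContDiff ℝ (⊤ : ℕ∞) u) (husupp : HasCompactSupport u) :
    (∑' j, (L2E (Qop V fun x => (χ j x : ℂ) * u x)) ^ 2 ≤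
      2 * (L2E (Qop V u)) ^ 2 + 3 * m₂ ^ 2 * (L2E u) ^ 2
        + 8 * m₁ ^ 2 * ∫ x, gradSqC u x) ∧
    ((∀ x, 0 ≤ (V x).re) →
      ∑' j, (L2E (Qop V fun x => (χ j x : ℂ) * u x)) ^ 2 ≤
        2 * (L2E (Qop V u)) ^ 2 + 3 * m₂ ^ 2 * (L2E u) ^ 2
          + 8 * m₁ ^ 2 * ∫ x, (starRingEnd ℂ (Qop V u x) * u x).re) := by
  classical
  have hSfin : {j | (Function.support (χ j) ∩ tsupport u).Nonempty}.Finite :=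
    hχ_locfin.finite_nonempty_inter_compact husupp
  set S : Finset J := hSfin.toFinset with hSdef
  -- terms outside S vanish
  have hzero : ∀ j ∉ S, (fun y => (χ j y : ℂ) * u y) = fun _ => (0 : ℂ) := by
    intro j hj
    funext y
    by_cases hy : u y = 0
    · simp [hy]
    by_cases hχy : χ j y = 0
    · simp [hχy]
    exact absurd (hSfin.mem_toFinset.2 ⟨y, hχy, subset_tsupport u hy⟩) hj
  have hQzero : ∀ j ∉ S, (L2E (Qop V fun x => (χ j x : ℂ) * u x)) ^ 2 = 0 := by
    intro j hj
    rw [hzero j hj]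
    have h0 : Qop V (fun _ : EuclideanSpace ℝ (Fin d) => (0 : ℂ)) = fun _ => 0 := by
      funext x
      simp [Qop, lapC]
    rw [h0]
    simp [L2E, eLpNorm_zero']
  have htsum : ∑' j, (L2E (Qop V fun x => (χ j x : ℂ) * u x)) ^ 2
      = ∑ j ∈ S, (L2E (Qop V fun x => (χ j x : ℂ) * u x)) ^ 2 :=
    tsum_eq_sum hQzero
  -- nonnegativity of the constants
  have hm₁0 : 0 ≤ m₁ ^ 2 := by
    rw [hm₁]
    refine le_trans (tsum_nonneg fun j => Finset.sum_nonneg fun i _ => sq_nonneg _)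
      (le_ciSup hbdd₁ 0)
  have hm₂0 : 0 ≤ m₂ ^ 2 := by
    rw [hm₂]
    refine le_trans (tsum_nonneg fun j => sq_nonneg _) (le_ciSup hbdd₂ 0)
  -- memberships in L²
  have hmemu : MemLp u 2 volume := hu.continuous.memLp_of_hasCompactSupport husupp
  have hmemQu : MemLp (Qop V u) 2 volume := memℒp_Qop V hVL2 hu husupp
  have hsmooth_j : ∀ j, ContDiff ℝ (⊤ : ℕ∞) (fun y => (χ j y : ℂ) * u y) := fun j =>
    (Complex.ofRealCLM.contDiff.comp (hχ_smooth j)).mul hu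
  have hsupp_j : ∀ j, HasCompactSupport (fun y => (χ j y : ℂ) * u y) := fun j =>
    husupp.mul_left
  have hmemQj : ∀ j, MemLp (Qop V fun x => (χ j x : ℂ) * u x) 2 volume := fun j =>
    memℒp_Qop V hVL2 (hsmooth_j j) (hsupp_j j)
  -- the pointwise master estimate
  have hpoint : ∀ x, ∑ j ∈ S, ‖Qop V (fun y => (χ j y : ℂ) * u y) x‖ ^ 2
      ≤ 2 * ‖Qop V u x‖ ^ 2 + 3 * m₂ ^ 2 * ‖u x‖ ^ 2 + 8 * m₁ ^ 2 * gradSqC u x := by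
    intro x
    obtain ⟨t, htx, htfin⟩ := hχ_locfin x
    set F : Finset J := htfin.toFinset with hFdef
    set N : Set (EuclideanSpace ℝ (Fin d)) := interior t with hNdef
    have hNx : x ∈ N := mem_interior_iff_mem_nhds.2 htx
    have hNopen : IsOpen N := isOpen_interior
    have hvanish : ∀ j ∉ F, ∀ y ∈ N, χ j y = 0 := by
      intro j hj y hy
      by_contra h
      exact hj (htfin.mem_toFinset.2 ⟨y, h, interior_subset hy⟩)
    have hD0 : ∀ j ∉ F, ∀ y ∈ N, fderiv ℝ (χ j) y = 0 := by
      intro j hj y hy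
      have hev : χ j =ᶠ[nhds y] (fun _ => 0) :=
        Filter.eventuallyEq_of_mem (hNopen.mem_nhds hy) (fun z hz => hvanish j hj z hz)
      rw [hev.fderiv_eq]
      exact fderiv_const_apply 0
    have hD20 : ∀ j ∉ F, ∀ v : EuclideanSpace ℝ (Fin d),
        fderiv ℝ (fun y => fderiv ℝ (χ j) y v) x = 0 := by
      intro j hj v
      have hev : (fun y => fderiv ℝ (χ j) y v) =ᶠ[nhds x] (fun _ => 0) :=
        Filter.eventuallyEq_of_mem (hNopen.mem_nhds hNx)
          (fun z hz => by rw [hD0 j hj z hz]; rfl)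
      rw [hev.fderiv_eq]
      exact fderiv_const_apply 0
    have hχ0 : ∀ j ∉ F, χ j x = 0 := fun j hj => hvanish j hj x hNx
    have hgrad0 : ∀ j ∉ F, gradSqR (χ j) x = 0 := fun j hj =>
      Finset.sum_eq_zero fun i _ => by rw [hD0 j hj x hNx]; simp
    have hlap0 : ∀ j ∉ F, lapR (χ j) x = 0 := fun j hj =>
      Finset.sum_eq_zero fun i _ => by rw [hD20 j hj _]; rfl
    set G : Finset J := S ∪ F with hGdef
    have hFG : F ⊆ G := Finset.subset_union_right
    -- the derivative of the partition of unity identity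
    have hsum_deriv : ∀ i : Fin d,
        ∑ j ∈ G, χ j x * fderiv ℝ (χ j) x (EuclideanSpace.single i 1) = 0 := by
      intro i
      have hred : ∑ j ∈ G, χ j x * fderiv ℝ (χ j) x (EuclideanSpace.single i 1)
          = ∑ j ∈ F, χ j x * fderiv ℝ (χ j) x (EuclideanSpace.single i 1) :=
        (Finset.sum_subset hFG (fun j _ hjF => by rw [hχ0 j hjF, zero_mul])).symm
      have hgconst : (fun y => ∑ j ∈ F, (χ j y) ^ 2) =ᶠ[nhds x] (fun _ => 1) := by
        refine Filter.eventuallyEq_of_mem (hNopen.mem_nhds hNx) (fun y hy => ?_)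
        rw [← hχ_sum y]
        exact (tsum_eq_sum (fun j hj => by rw [hvanish j hj y hy]; ring)).symm
      have hdg : fderiv ℝ (fun y => ∑ j ∈ F, (χ j y) ^ 2) x = 0 := by
        rw [hgconst.fderiv_eq]
        exact fderiv_const_apply 1
      have hsq : ∀ j, fderiv ℝ (fun y => (χ j y) ^ 2) x (EuclideanSpace.single i 1)
          = 2 * (χ j x * fderiv ℝ (χ j) x (EuclideanSpace.single i 1)) := by
        intro j
        have hrw : (fun y => (χ j y) ^ 2) = fun y => χ j y * χ j y := by
          funext y; ring
        have hdj : DifferentiableAt ℝ (χ j) x := (hχ_smooth j).differentiable (by simp) x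
        rw [hrw, fderiv_fun_mul hdj hdj]
        simp only [ContinuousLinearMap.add_apply, ContinuousLinearMap.smul_apply, smul_eq_mul]
        ring
      have hexp : fderiv ℝ (fun y => ∑ j ∈ F, (χ j y) ^ 2) x (EuclideanSpace.single i 1)
          = ∑ j ∈ F, 2 * (χ j x * fderiv ℝ (χ j) x (EuclideanSpace.single i 1)) := by
        rw [fderiv_fun_sum (fun j _ =>
          (((hχ_smooth j).pow 2).differentiable (by simp)) x)]
        rw [ContinuousLinearMap.sum_apply]
        exact Finset.sum_congr rfl fun j _ => hsq j
      rw [hred]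
      have h0 : ∑ j ∈ F, 2 * (χ j x * fderiv ℝ (χ j) x (EuclideanSpace.single i 1)) = 0 := by
        rw [← hexp, hdg]; rfl
      rw [← Finset.mul_sum] at h0
      linarith
    -- summability facts
    have hsummable₁ : Summable (fun j => (χ j x) ^ 2) :=
      summable_of_ne_finset_zero (s := F) (fun j hj => by rw [hχ0 j hj]; ring)
    have hsummable₂ : Summable (fun j => (lapR (χ j) x) ^ 2) :=
      summable_of_ne_finset_zero (s := F) (fun j hj => by rw [hlap0 j hj]; ring)
    have hsummable₃ : Summable (fun j => gradSqR (χ j) x) :=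
      summable_of_ne_finset_zero (s := F) (fun j hj => hgrad0 j hj)
    have hbA : ∑ j ∈ G, (χ j x) ^ 2 ≤ 1 := by
      rw [← hχ_sum x]
      exact Summable.sum_le_tsum G (fun j _ => sq_nonneg _) hsummable₁
    have hbB : ∑ j ∈ G, (lapR (χ j) x) ^ 2 ≤ m₂ ^ 2 := by
      rw [hm₂]
      exact le_trans (Summable.sum_le_tsum G (fun j _ => sq_nonneg _) hsummable₂)
        (le_ciSup hbdd₂ x)
    have hbC : ∑ j ∈ G, gradSqR (χ j) x ≤ m₁ ^ 2 := by
      rw [hm₁]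
      refine le_trans (Summable.sum_le_tsum G (fun j _ => Finset.sum_nonneg fun i _ => sq_nonneg _)
        hsummable₃) (le_ciSup hbdd₁ x)
    -- the vanishing cross term
    have hcross0 : ∑ j ∈ G, (starRingEnd ℂ (Qop V u x)
        * ∑ i : Fin d, ((χ j x * fderiv ℝ (χ j) x (EuclideanSpace.single i 1) : ℝ) : ℂ)
          * fderiv ℝ u x (EuclideanSpace.single i 1)).re = 0 := by
      rw [← Complex.re_sum, ← Finset.mul_sum]
      have : ∑ j ∈ G, ∑ i : Fin d,
          ((χ j x * fderiv ℝ (χ j) x (EuclideanSpace.single i 1) : ℝ) : ℂ)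
            * fderiv ℝ u x (EuclideanSpace.single i 1) = 0 := by
        rw [Finset.sum_comm]
        refine Finset.sum_eq_zero fun i _ => ?_
        rw [← Finset.sum_mul, ← Complex.ofReal_sum]
        rw [hsum_deriv i]
        simp
      rw [this]
      simp
    -- per-index bound and summation
    have hstep : ∑ j ∈ G, ‖Qop V (fun y => (χ j y : ℂ) * u y) x‖ ^ 2
        ≤ ∑ j ∈ G, (2 * (χ j x ^ 2) * ‖Qop V u x‖ ^ 2 + 3 * (lapR (χ j) x) ^ 2 * ‖u x‖ ^ 2
            + 8 * gradSqR (χ j) x * gradSqC u x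
            - 4 * (starRingEnd ℂ (Qop V u x)
                * ∑ i : Fin d, ((χ j x * fderiv ℝ (χ j) x (EuclideanSpace.single i 1) : ℝ) : ℂ)
                  * fderiv ℝ u x (EuclideanSpace.single i 1)).re) :=
      Finset.sum_le_sum fun j _ => pointwise_bound V (χ j) u (hχ_smooth j) hu x
    have hSG : ∑ j ∈ S, ‖Qop V (fun y => (χ j y : ℂ) * u y) x‖ ^ 2
        ≤ ∑ j ∈ G, ‖Qop V (fun y => (χ j y : ℂ) * u y) x‖ ^ 2 :=
      Finset.sum_le_sum_of_subset_of_nonneg Finset.subset_union_left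
        (fun j _ _ => sq_nonneg _)
    have hexpand : ∑ j ∈ G, (2 * (χ j x ^ 2) * ‖Qop V u x‖ ^ 2
          + 3 * (lapR (χ j) x) ^ 2 * ‖u x‖ ^ 2
          + 8 * gradSqR (χ j) x * gradSqC u x
          - 4 * (starRingEnd ℂ (Qop V u x)
              * ∑ i : Fin d, ((χ j x * fderiv ℝ (χ j) x (EuclideanSpace.single i 1) : ℝ) : ℂ)
                * fderiv ℝ u x (EuclideanSpace.single i 1)).re)
        = 2 * (∑ j ∈ G, χ j x ^ 2) * ‖Qop V u x‖ ^ 2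
          + 3 * (∑ j ∈ G, (lapR (χ j) x) ^ 2) * ‖u x‖ ^ 2
          + 8 * (∑ j ∈ G, gradSqR (χ j) x) * gradSqC u x
          - 4 * ∑ j ∈ G, (starRingEnd ℂ (Qop V u x)
              * ∑ i : Fin d, ((χ j x * fderiv ℝ (χ j) x (EuclideanSpace.single i 1) : ℝ) : ℂ)
                * fderiv ℝ u x (EuclideanSpace.single i 1)).re := by
      rw [Finset.sum_sub_distrib, Finset.sum_add_distrib, Finset.sum_add_distrib,
        ← Finset.sum_mul, ← Finset.sum_mul, ← Finset.sum_mul, ← Finset.mul_sum,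
        ← Finset.mul_sum, ← Finset.mul_sum, ← Finset.mul_sum]
    have hgSq0 : 0 ≤ gradSqC u x := Finset.sum_nonneg fun i _ => sq_nonneg _
    have hQ0 : (0:ℝ) ≤ ‖Qop V u x‖ ^ 2 := sq_nonneg _
    have hu0 : (0:ℝ) ≤ ‖u x‖ ^ 2 := sq_nonneg _
    refine le_trans hSG (le_trans hstep ?_)
    rw [hexpand, hcross0]
    nlinarith [mul_le_mul_of_nonneg_right hbA hQ0, mul_le_mul_of_nonneg_right hbB hu0,
      mul_le_mul_of_nonneg_right hbC hgSq0]
  -- integrability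
  have hcs_gradSqC : HasCompactSupport (gradSqC u) := by
    have : ∀ i : Fin d, HasCompactSupport
        (fun x => ‖fderiv ℝ u x (EuclideanSpace.single i 1)‖ ^ 2) := fun i =>
      ((hcs_D husupp _).comp_left (g := fun z : ℂ => ‖z‖ ^ 2) (by simp) : _)
    exact hcs_sum Finset.univ _ this
  have hcont_gradSqC : Continuous (gradSqC u) := by
    refine continuous_finset_sum _ fun i _ => ?_
    exact ((contDiff_D hu _).continuous.norm.pow 2)
  have hint_grad : Integrable (gradSqC u) volume :=
    hcont_gradSqC.integrable_of_hasCompactSupport hcs_gradSqC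
  have hint_j : ∀ j, Integrable
      (fun x => ‖Qop V (fun y => (χ j y : ℂ) * u y) x‖ ^ 2) volume := fun j =>
    integrable_norm_sq (hmemQj j)
  have hint_RHS : Integrable (fun x => 2 * ‖Qop V u x‖ ^ 2 + 3 * m₂ ^ 2 * ‖u x‖ ^ 2
      + 8 * m₁ ^ 2 * gradSqC u x) volume :=
    (((integrable_norm_sq hmemQu).const_mul 2).add
      ((integrable_norm_sq hmemu).const_mul (3 * m₂ ^ 2))).add
      (hint_grad.const_mul (8 * m₁ ^ 2))
  -- Part 1
  have part1 : ∑' j, (L2E (Qop V fun x => (χ j x : ℂ) * u x)) ^ 2 ≤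
      2 * (L2E (Qop V u)) ^ 2 + 3 * m₂ ^ 2 * (L2E u) ^ 2
        + 8 * m₁ ^ 2 * ∫ x, gradSqC u x := by
    rw [htsum, L2E_sq hmemQu, L2E_sq hmemu]
    calc ∑ j ∈ S, (L2E (Qop V fun x => (χ j x : ℂ) * u x)) ^ 2
        = ∑ j ∈ S, ∫ x, ‖Qop V (fun y => (χ j y : ℂ) * u y) x‖ ^ 2 :=
          Finset.sum_congr rfl fun j _ => L2E_sq (hmemQj j)
      _ = ∫ x, ∑ j ∈ S, ‖Qop V (fun y => (χ j y : ℂ) * u y) x‖ ^ 2 :=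
          (integral_finset_sum S fun j _ => hint_j j).symm
      _ ≤ ∫ x, (2 * ‖Qop V u x‖ ^ 2 + 3 * m₂ ^ 2 * ‖u x‖ ^ 2
            + 8 * m₁ ^ 2 * gradSqC u x) :=
          integral_mono (integrable_finset_sum S fun j _ => hint_j j) hint_RHS hpoint
      _ = 2 * (∫ x, ‖Qop V u x‖ ^ 2) + 3 * m₂ ^ 2 * (∫ x, ‖u x‖ ^ 2)
            + 8 * m₁ ^ 2 * ∫ x, gradSqC u x := by
          have h1 : Integrable (fun x => 2 * ‖Qop V u x‖ ^ 2) volume :=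
            (integrable_norm_sq hmemQu).const_mul 2
          have h2 : Integrable (fun x => 3 * m₂ ^ 2 * ‖u x‖ ^ 2) volume :=
            (integrable_norm_sq hmemu).const_mul (3 * m₂ ^ 2)
          have h3 : Integrable (fun x => 8 * m₁ ^ 2 * gradSqC u x) volume :=
            hint_grad.const_mul (8 * m₁ ^ 2)
          have h12 : Integrable (fun x => 2 * ‖Qop V u x‖ ^ 2 + 3 * m₂ ^ 2 * ‖u x‖ ^ 2)
              volume := h1.add h2
          rw [integral_add h12 h3, integral_add h1 h2,
            MeasureTheory.integral_const_mul, MeasureTheory.integral_const_mul,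
            MeasureTheory.integral_const_mul]
  refine ⟨part1, fun hRe => ?_⟩
  -- Part 2
  have hgrad_le : ∫ x, gradSqC u x ≤ ∫ x, (starRingEnd ℂ (Qop V u x) * u x).re := by
    have hdu : Differentiable ℝ u := hu.differentiable (by simp)
    have hVu : MemLp (fun x => V x * u x) 2 volume := hVL2 u hu husupp
    -- integration by parts in each coordinate
    have hIBP : ∀ i : Fin d,
        ∫ x, ‖fderiv ℝ u x (EuclideanSpace.single i 1)‖ ^ 2
          = -∫ x, (starRingEnd ℂ (fderiv ℝ
              (fun y => fderiv ℝ u y (EuclideanSpace.single i 1)) x (EuclideanSpace.single i 1))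
              * u x).re := by
      intro i
      set v : EuclideanSpace ℝ (Fin d) := EuclideanSpace.single i 1 with hv
      set Du : EuclideanSpace ℝ (Fin d) → ℂ := fun y => fderiv ℝ u y v with hDu
      have hDu_cd : ContDiff ℝ (⊤ : ℕ∞) Du := contDiff_D hu v
      have hDu_cs : HasCompactSupport Du := hcs_D husupp v
      have hDDu_cd : ContDiff ℝ (⊤ : ℕ∞) (fun y => fderiv ℝ Du y v) := contDiff_D hDu_cd v
      have hDDu_cs : HasCompactSupport (fun y => fderiv ℝ Du y v) := hcs_D hDu_cs v
      set e : ℂ →L[ℝ] ℂ := Complex.conjCLE.toContinuousLinearMap with he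
      have heapp : ∀ z : ℂ, e z = starRingEnd ℂ z := fun z => rfl
      set f : EuclideanSpace ℝ (Fin d) → ℂ := fun y => starRingEnd ℂ (Du y) with hf
      have hfe : f = fun y => e (Du y) := funext fun y => (heapp (Du y)).symm
      have hfdiff : Differentiable ℝ f := by
        rw [hfe]
        exact e.differentiable.comp (hDu_cd.differentiable (by simp))
      have hfderiv : ∀ y, fderiv ℝ f y v = starRingEnd ℂ (fderiv ℝ Du y v) := by
        intro y
        have h1 : fderiv ℝ f y = e.comp (fderiv ℝ Du y) := by
          rw [hfe]
          exact (e.hasFDerivAt.comp y ((hDu_cd.differentiable (by simp)) y).hasFDerivAt).fderiv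
        rw [h1]
        rfl
      have hfcont : Continuous f := Complex.continuous_conj.comp hDu_cd.continuous
      have hint1 : Integrable (fun x => fderiv ℝ f x v * u x) volume := by
        have : (fun x => fderiv ℝ f x v * u x)
            = fun x => starRingEnd ℂ (fderiv ℝ Du x v) * u x :=
          funext fun x => by rw [hfderiv x]
        rw [this]
        exact ((Complex.continuous_conj.comp hDDu_cd.continuous).mul
          hu.continuous).integrable_of_hasCompactSupport husupp.mul_left
      have hint2 : Integrable (fun x => f x * fderiv ℝ u x v) volume :=
        (hfcont.mul hDu_cd.continuous).integrable_of_hasCompactSupport hDu_cs.mul_left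
      have hint3 : Integrable (fun x => f x * u x) volume :=
        (hfcont.mul hu.continuous).integrable_of_hasCompactSupport husupp.mul_left
      have h := integral_mul_fderiv_eq_neg_fderiv_mul_of_integrable
        (μ := (volume : Measure (EuclideanSpace ℝ (Fin d)))) (f := f) (g := u) (v := v)
        hint1 hint2 hint3 (fun x _ => hfdiff x) (fun x _ => hdu x)
      -- rewrite both sides
      have hL : ∫ x, f x * fderiv ℝ u x v ∂(volume : Measure (EuclideanSpace ℝ (Fin d)))
          = ((∫ x, ‖Du x‖ ^ 2 : ℝ) : ℂ) := by
        rw [show (fun x => f x * fderiv ℝ u x v) = fun x => ((‖Du x‖ ^ 2 : ℝ) : ℂ) from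
          funext fun x => by
            rw [hf]
            push_cast
            exact Complex.conj_mul' (Du x)]
        exact integral_ofReal
      have hR : ∫ x, fderiv ℝ f x v * u x ∂(volume : Measure (EuclideanSpace ℝ (Fin d)))
          = ∫ x, starRingEnd ℂ (fderiv ℝ Du x v) * u x := by
        congr 1
        exact funext fun x => by rw [hfderiv x]
      rw [hL, hR] at h
      have hre := congrArg Complex.re h
      rw [Complex.ofReal_re, Complex.neg_re] at hre
      rw [hre]
      congr 1
      exact (integral_re (((Complex.continuous_conj.comp hDDu_cd.continuous).mul
        hu.continuous).integrable_of_hasCompactSupport husupp.mul_left)).symm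
    -- integrability of each coordinate piece
    have hint_co : ∀ i : Fin d, Integrable
        (fun x => ‖fderiv ℝ u x (EuclideanSpace.single i 1)‖ ^ 2) volume := fun i =>
      ((contDiff_D hu _).continuous.norm.pow 2).integrable_of_hasCompactSupport
        (((hcs_D husupp _).comp_left (g := fun z : ℂ => ‖z‖ ^ 2) (by simp) :
          HasCompactSupport (fun x => ‖fderiv ℝ u x (EuclideanSpace.single i 1)‖ ^ 2)))
    have hint_co2 : ∀ i : Fin d, Integrable (fun x => (starRingEnd ℂ (fderiv ℝ
        (fun y => fderiv ℝ u y (EuclideanSpace.single i 1)) x (EuclideanSpace.single i 1))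
          * u x).re) volume := fun i => by
      have hc : Continuous (fun x => (starRingEnd ℂ (fderiv ℝ
          (fun y => fderiv ℝ u y (EuclideanSpace.single i 1)) x (EuclideanSpace.single i 1))
            * u x).re) :=
        Complex.continuous_re.comp ((Complex.continuous_conj.comp
          (contDiff_D (contDiff_D hu _) _).continuous).mul hu.continuous)
      refine hc.integrable_of_hasCompactSupport ?_
      exact ((husupp.mul_left).comp_left (g := Complex.re) rfl : _)
    -- the key identity
    have hsum : ∫ x, gradSqC u x = ∫ x, (starRingEnd ℂ (-lapC u x) * u x).re := by
      have h1 : ∫ x, gradSqC u x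
          = ∑ i : Fin d, ∫ x, ‖fderiv ℝ u x (EuclideanSpace.single i 1)‖ ^ 2 :=
        integral_finset_sum Finset.univ fun i _ => hint_co i
      have h2 : ∫ x, (starRingEnd ℂ (-lapC u x) * u x).re
          = ∑ i : Fin d, -∫ x, (starRingEnd ℂ (fderiv ℝ
              (fun y => fderiv ℝ u y (EuclideanSpace.single i 1)) x (EuclideanSpace.single i 1))
                * u x).re := by
        have hpt : ∀ x, (starRingEnd ℂ (-lapC u x) * u x).re
            = ∑ i : Fin d, -(starRingEnd ℂ (fderiv ℝ
                (fun y => fderiv ℝ u y (EuclideanSpace.single i 1)) x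
                  (EuclideanSpace.single i 1)) * u x).re := by
          intro x
          rw [map_neg, neg_mul, Complex.neg_re, lapC, map_sum, Finset.sum_mul,
            Complex.re_sum, ← Finset.sum_neg_distrib]
        rw [show (fun x => (starRingEnd ℂ (-lapC u x) * u x).re)
            = fun x => ∑ i : Fin d, -(starRingEnd ℂ (fderiv ℝ
                (fun y => fderiv ℝ u y (EuclideanSpace.single i 1)) x
                  (EuclideanSpace.single i 1)) * u x).re from funext hpt]
        rw [integral_finset_sum Finset.univ (fun i _ => by exact (hint_co2 i).neg)]
        exact Finset.sum_congr rfl fun i _ => integral_neg _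
      rw [h1, h2]
      exact Finset.sum_congr rfl fun i _ => hIBP i
    -- pointwise comparison
    have hsplit : ∀ x, starRingEnd ℂ (Qop V u x) * u x
        = starRingEnd ℂ (-lapC u x) * u x + starRingEnd ℂ (V x * u x) * u x := by
      intro x
      rw [show Qop V u x = -lapC u x + V x * u x from rfl, map_add, add_mul]
    have hVterm : ∀ x, (starRingEnd ℂ (V x * u x) * u x).re = (V x).re * ‖u x‖ ^ 2 := by
      intro x
      rw [map_mul, mul_assoc, Complex.conj_mul', ← Complex.ofReal_pow,
        mul_comm (starRingEnd ℂ (V x)) _, Complex.re_ofReal_mul, Complex.conj_re]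
      ring
    have hintV : Integrable (fun x => (starRingEnd ℂ (V x * u x) * u x).re) volume := by
      refine Integrable.mono' (g := fun x => ‖V x * u x‖ ^ 2 / 2 + ‖u x‖ ^ 2 / 2)
        (((integrable_norm_sq hVu).div_const 2).add ((integrable_norm_sq hmemu).div_const 2))
        ?_ (Filter.Eventually.of_forall fun x => ?_)
      · exact Complex.continuous_re.comp_aestronglyMeasurable
          (((Complex.continuous_conj.comp_aestronglyMeasurable
            hVu.aestronglyMeasurable).mul hmemu.aestronglyMeasurable))
      · have h1 : ‖(starRingEnd ℂ (V x * u x) * u x).re‖ ≤ ‖starRingEnd ℂ (V x * u x) * u x‖ :=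
          Complex.abs_re_le_norm _
        have h2 : ‖starRingEnd ℂ (V x * u x) * u x‖ = ‖V x * u x‖ * ‖u x‖ := by
          rw [norm_mul, RCLike.norm_conj]
        nlinarith [norm_nonneg (V x * u x), norm_nonneg (u x), sq_nonneg (‖V x * u x‖ - ‖u x‖)]
    have hintL : Integrable (fun x => (starRingEnd ℂ (-lapC u x) * u x).re) volume := by
      have hc : Continuous (fun x => (starRingEnd ℂ (-lapC u x) * u x).re) :=
        Complex.continuous_re.comp ((Complex.continuous_conj.comp
          (cont_lapC hu).neg).mul hu.continuous)
      refine hc.integrable_of_hasCompactSupport ?_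
      exact ((husupp.mul_left).comp_left (g := Complex.re) rfl : _)
    have hintR : Integrable (fun x => (starRingEnd ℂ (Qop V u x) * u x).re) volume := by
      have heq : (fun x => (starRingEnd ℂ (Qop V u x) * u x).re)
          = fun x => (starRingEnd ℂ (-lapC u x) * u x).re
            + (starRingEnd ℂ (V x * u x) * u x).re :=
        funext fun x => by rw [hsplit x, Complex.add_re]
      rw [heq]
      exact hintL.add hintV
    rw [hsum]
    refine integral_mono hintL hintR fun x => ?_
    rw [hsplit x, Complex.add_re]
    have := hVterm x
    nlinarith [hRe x, sq_nonneg ‖u x‖, mul_nonneg (hRe x) (sq_nonneg ‖u x‖)]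
  have h8 : 8 * m₁ ^ 2 * ∫ x, gradSqC u x
      ≤ 8 * m₁ ^ 2 * ∫ x, (starRingEnd ℂ (Qop V u x) * u x).re :=
    mul_le_mul_of_nonneg_left hgrad_le (by positivity)
  linarith [part1]
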